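/- Frontier property (justifying the hypothesis of the BMSSP subproblem): let d̂ be an estimate function and b, B ∈ ℝ≥0∞ with 0 < b ≤ B. Assume (i) every vertex u with d(u) < b is complete, and (ii) for all vertices u, v with d(u) < b, we have d̂(v) ≤ d(u) + w(u,v) (all edges out of vertices at distance less than b have been relaxed). Then for every vertex v with d̂(v) ≠ d(v) and d(v) < B, there exists a complete vertex u with b ≤ d̂(u) < B such that the shortest path to v visits u. -/

import Mathlib

open scoped ENNReal

namespace SSSP

variable {V : Type*}

/-- The weight of a walk (a list of vertices): the sum of `w` over consecutive pairs.
A one-vertex walk has weight 0. -/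
noncomputable def walkWeight (w : V → V → ℝ≥0∞) : List V → ℝ≥0∞
  | [] => 0
  | [_] => 0
  | a :: b :: p => w a b + walkWeight w (b :: p)

/-- `p` is a walk from `u` to `v`: a nonempty list beginning at `u` and ending at `v`. -/
def IsWalk (u v : V) (p : List V) : Prop :=
  p ≠ [] ∧ p.head? = some u ∧ p.getLast? = some v

/-- The distance from `u` to `v`: the infimum of the weights of all walks from `u` to `v`. -/
noncomputable def dist (w : V → V → ℝ≥0∞) (u v : V) : ℝ≥0∞ :=
  ⨅ p : {p : List V // IsWalk u v p}, walkWeight w p.1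

/-- The shortest path (from `s`) to `v` visits `u`. -/
def Visits (w : V → V → ℝ≥0∞) (s u v : V) : Prop :=
  dist w s u + dist w u v = dist w s v

/-- The uniqueness assumption: any two distinct walks starting from `s` with finite
weight have different weights. -/
def UniqueWeights (w : V → V → ℝ≥0∞) (s : V) : Prop :=
  ∀ p q : List V, p ≠ [] → q ≠ [] → p.head? = some s → q.head? = some s →
    walkWeight w p ≠ ⊤ → walkWeight w q ≠ ⊤ → walkWeight w p = walkWeight w q → p = q

/-- The relaxation operator. -/
noncomputable def relax (w : V → V → ℝ≥0∞) (f : V → ℝ≥0∞) : V → ℝ≥0∞ :=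
  fun v => min (f v) (⨅ u, f u + w u v)

end SSSP

/-!
Take a shortest walk from `s` to `v`; one exists because every walk can be shortened to one
without repeated vertices, and there are finitely many of those. Since `d(s) = 0 < b ≤ d(v)`,
the walk has a first edge `x → u` leaving the region `{d < b}`. Subwalks of a shortest walk
of finite weight are shortest, so `u` lies on a shortest path to `v` and
`d(u) = d(x) + w(x, u)`; as `x` has been relaxed, `d̂(u) ≤ d(x) + w(x, u) = d(u)`.
-/

theorem List.exists_eq_append_cons_append_cons_of_not_nodup {α : Type*} :
    ∀ {l : List α}, ¬ l.Nodup → ∃ l₁ a l₂ l₃, l = l₁ ++ a :: (l₂ ++ a :: l₃)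
  | [], h => absurd List.nodup_nil h
  | x :: t, h => by
      by_cases hx : x ∈ t
      · obtain ⟨l₂, l₃, rfl⟩ := List.append_of_mem hx
        exact ⟨[], x, l₂, l₃, rfl⟩
      · obtain ⟨l₁, a, l₂, l₃, rfl⟩ :=
          List.exists_eq_append_cons_append_cons_of_not_nodup fun ht => h (ht.cons hx)
        exact ⟨x :: l₁, a, l₂, l₃, rfl⟩

theorem ENNReal.eq_and_eq_of_add_le_add {a b c d : ℝ≥0∞} (hc : c ≤ a) (hd : d ≤ b)
    (h : a + b ≤ c + d) (hab : a + b ≠ ⊤) : c = a ∧ d = b := by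
  obtain ⟨ha, hb⟩ := ENNReal.add_ne_top.mp hab
  constructor <;> by_contra hne
  · exact h.not_gt (ENNReal.add_lt_add_of_lt_of_le (ne_top_of_le_ne_top hb hd) (hc.lt_of_ne hne) hd)
  · exact h.not_gt (ENNReal.add_lt_add_of_le_of_lt (ne_top_of_le_ne_top ha hc) hc (hd.lt_of_ne hne))

namespace SSSP

variable {V : Type*} (w : V → V → ℝ≥0∞)

lemma walkWeight_append_cons :
    ∀ (p : List V) (x : V) (q : List V),
      walkWeight w (p ++ x :: q) = walkWeight w (p ++ [x]) + walkWeight w (x :: q)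
  | [], _, _ => by simp [walkWeight]
  | [_], _, _ => by simp [walkWeight]
  | a :: b :: p, x, q => by
      have ih := walkWeight_append_cons (b :: p) x q
      simp only [List.cons_append] at ih
      simp only [List.cons_append, walkWeight, ih, add_assoc]

lemma IsWalk.exists_eq_cons {u v : V} {p : List V} (hp : IsWalk u v p) : ∃ t, p = u :: t := by
  obtain ⟨hne, hhead, -⟩ := hp
  cases p <;> simp_all

lemma isWalk_append_cons_iff {u v x : V} {p q : List V} :
    IsWalk u v (p ++ x :: q) ↔ IsWalk u x (p ++ [x]) ∧ IsWalk x v (x :: q) := by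
  simp [IsWalk, List.head?_append, List.getLast?_append]

lemma isWalk_cons_cons_iff {u v x : V} {p : List V} :
    IsWalk u v (u :: x :: p) ↔ IsWalk x v (x :: p) := by
  simp [IsWalk]

variable {w}

lemma dist_le_walkWeight {u v : V} {p : List V} (hp : IsWalk u v p) :
    dist w u v ≤ walkWeight w p :=
  iInf_le (fun p : {p // IsWalk u v p} => walkWeight w p.1) ⟨p, hp⟩

variable (w)

lemma dist_self (u : V) : dist w u u = 0 :=
  nonpos_iff_eq_zero.mp (dist_le_walkWeight (p := [u]) (by simp [IsWalk]))

lemma dist_triangle (s u v : V) : dist w s v ≤ dist w s u + dist w u v := by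
  unfold dist
  rw [ENNReal.iInf_add]
  refine le_iInf fun ⟨p, hp⟩ => ?_
  rw [ENNReal.add_iInf]
  refine le_iInf fun ⟨q, hq⟩ => ?_
  obtain ⟨p', rfl⟩ := List.getLast?_eq_some_iff.mp hp.2.2
  obtain ⟨q', rfl⟩ := hq.exists_eq_cons
  rw [← walkWeight_append_cons]
  exact dist_le_walkWeight (isWalk_append_cons_iff.mpr ⟨hp, hq⟩)

lemma walkWeight_le_of_cycle (p₁ : List V) (a : V) (p₂ p₃ : List V) :
    walkWeight w (p₁ ++ a :: p₃) ≤ walkWeight w (p₁ ++ a :: (p₂ ++ a :: p₃)) :=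
  calc walkWeight w (p₁ ++ a :: p₃)
      = walkWeight w (p₁ ++ [a]) + walkWeight w (a :: p₃) := walkWeight_append_cons w _ _ _
    _ ≤ walkWeight w (p₁ ++ [a]) + (walkWeight w (a :: p₂ ++ [a]) + walkWeight w (a :: p₃)) := by
      gcongr; exact le_add_self
    _ = walkWeight w (p₁ ++ [a]) + walkWeight w (a :: (p₂ ++ a :: p₃)) := by
      rw [← walkWeight_append_cons w (a :: p₂)]; rfl
    _ = walkWeight w (p₁ ++ a :: (p₂ ++ a :: p₃)) := (walkWeight_append_cons w _ _ _).symm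

lemma IsWalk.exists_nodup {u v : V} {p : List V} (hp : IsWalk u v p) :
    ∃ q, IsWalk u v q ∧ q.Nodup ∧ walkWeight w q ≤ walkWeight w p := by
  by_cases hnd : p.Nodup
  · exact ⟨p, hp, hnd, le_rfl⟩
  obtain ⟨p₁, a, p₂, p₃, rfl⟩ := List.exists_eq_append_cons_append_cons_of_not_nodup hnd
  obtain ⟨hpre, hsuf⟩ := isWalk_append_cons_iff.mp hp
  rw [← List.cons_append, isWalk_append_cons_iff] at hsuf
  obtain ⟨q, hq, hqnd, hqw⟩ := (isWalk_append_cons_iff.mpr ⟨hpre, hsuf.2⟩).exists_nodup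
  exact ⟨q, hq, hqnd, hqw.trans (walkWeight_le_of_cycle w p₁ a p₂ p₃)⟩
termination_by p.length
decreasing_by subst_vars; simp

lemma IsWalk.exists_crossing {P : V → Prop} :
    ∀ {u v : V} {p : List V}, IsWalk u v p → ¬ P u → P v →
      ∃ p₁ x y p₂, p = p₁ ++ x :: y :: p₂ ∧ ¬ P x ∧ P y
  | _, _, [], hp, _, _ => absurd rfl hp.1
  | u, v, [_], hp, hu, hv => by
    obtain ⟨rfl, rfl⟩ : _ = u ∧ _ = v := by simpa [IsWalk] using hp
    exact absurd hv hu
  | u, v, a :: y :: t, hp, hu, hv => by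
    obtain rfl : a = u := by simpa [IsWalk] using hp.2.1
    by_cases hy : P y
    · exact ⟨[], a, y, t, rfl, hu, hy⟩
    · obtain ⟨p₁, x, z, p₂, heq, hx, hz⟩ := (isWalk_cons_cons_iff.mp hp).exists_crossing hy hv
      exact ⟨a :: p₁, x, z, p₂, by rw [heq]; rfl, hx, hz⟩

def IsShortestWalk (u v : V) (p : List V) : Prop :=
  IsWalk u v p ∧ walkWeight w p = dist w u v

lemma exists_isShortestWalk [Finite V] (u v : V) : ∃ p, IsShortestWalk w u v p := by
  have := Fintype.ofFinite V
  let S : Set (List V) := {q | IsWalk u v q ∧ q.Nodup}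
  have hS : S.Finite :=
    (List.finite_length_le V (Fintype.card V)).subset fun q hq => hq.2.length_le_card
  obtain ⟨q₀, hq₀, hq₀nd, -⟩ := (show IsWalk u v [u, v] by simp [IsWalk]).exists_nodup w
  obtain ⟨q, ⟨hq, -⟩, hmin⟩ := S.exists_min_image (walkWeight w) hS ⟨q₀, hq₀, hq₀nd⟩
  refine ⟨q, hq, le_antisymm (le_iInf fun ⟨r, hr⟩ => ?_) (dist_le_walkWeight hq)⟩
  obtain ⟨r', hr', hr'nd, hr'w⟩ := hr.exists_nodup w
  exact (hmin r' ⟨hr', hr'nd⟩).trans hr'w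

variable {w}

lemma IsShortestWalk.append_cons {u v x : V} {p q : List V}
    (h : IsShortestWalk w u v (p ++ x :: q)) (hfin : dist w u v ≠ ⊤) :
    IsShortestWalk w u x (p ++ [x]) ∧ IsShortestWalk w x v (x :: q) := by
  obtain ⟨hpre, hsuf⟩ := isWalk_append_cons_iff.mp h.1
  have hsum : walkWeight w (p ++ [x]) + walkWeight w (x :: q) = dist w u v :=
    (walkWeight_append_cons w p x q).symm.trans h.2
  obtain ⟨hpre', hsuf'⟩ := ENNReal.eq_and_eq_of_add_le_add (dist_le_walkWeight hpre)
    (dist_le_walkWeight hsuf) (hsum ▸ dist_triangle w u x v) (hsum ▸ hfin)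
  exact ⟨⟨hpre, hpre'.symm⟩, ⟨hsuf, hsuf'.symm⟩⟩

lemma IsShortestWalk.visits {u v x : V} {p q : List V}
    (h : IsShortestWalk w u v (p ++ x :: q)) (hfin : dist w u v ≠ ⊤) : Visits w u x v := by
  obtain ⟨hpre, hsuf⟩ := h.append_cons hfin
  rw [Visits, ← hpre.2, ← hsuf.2, ← walkWeight_append_cons, h.2]

lemma exists_edge_crossing_of_le_dist [Finite V] {s v : V} {b : ℝ≥0∞} (hb : 0 < b)
    (hbv : b ≤ dist w s v) (hv : dist w s v ≠ ⊤) :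
    ∃ x u, dist w s x < b ∧ b ≤ dist w s u ∧ dist w s u = dist w s x + w x u ∧
      Visits w s u v := by
  obtain ⟨p, hp⟩ := exists_isShortestWalk w s v
  obtain ⟨p₁, x, u, p₂, rfl, hx, hu⟩ := hp.1.exists_crossing (P := fun y => b ≤ dist w s y)
    (by simpa [dist_self] using hb.ne') hbv
  replace hp : IsShortestWalk w s v ((p₁ ++ [x]) ++ u :: p₂) := by simpa using hp
  have hvis : Visits w s u v := hp.visits hv
  have hsu : IsShortestWalk w s u (p₁ ++ x :: [u]) := by simpa using (hp.append_cons hv).1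
  have hu_fin : dist w s u ≠ ⊤ := ne_top_of_le_ne_top hv (hvis ▸ le_self_add)
  have hxu : dist w x u = w x u := by
    rw [← (hsu.append_cons hu_fin).2.2]
    simp [walkWeight]
  exact ⟨x, u, not_le.mp hx, hu, by rw [← hsu.visits hu_fin, hxu], hvis⟩

end SSSP

namespace SSSP

theorem frontier_property_general {V : Type*} [Fintype V] (w : V → V → ℝ≥0∞) (s : V)
    (dhat : V → ℝ≥0∞) (hest : ∀ v, dist w s v ≤ dhat v)
    (b B : ℝ≥0∞) (hb : 0 < b)
    (hcomplete : ∀ u, dist w s u < b → dhat u = dist w s u)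
    (hrelaxed : ∀ u v, dist w s u < b → dhat v ≤ dist w s u + w u v) :
    ∀ v, dhat v ≠ dist w s v → dist w s v < B →
      ∃ u, dhat u = dist w s u ∧ b ≤ dhat u ∧ dhat u < B ∧ Visits w s u v := by
  intro v hv hvB
  have hbv : b ≤ dist w s v := not_lt.mp fun h => hv (hcomplete v h)
  obtain ⟨x, u, hx, hu, hdu, hvis⟩ := exists_edge_crossing_of_le_dist hb hbv hvB.ne_top
  have hcompl : dhat u = dist w s u := le_antisymm (hdu ▸ hrelaxed x u hx) (hest u)
  exact ⟨u, hcompl, hcompl ▸ hu, hcompl ▸ (le_self_add.trans hvis.le).trans_lt hvB, hvis⟩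

/-- Frontier property justifying the hypothesis of the BMSSP subproblem. -/
theorem frontier_property {V : Type*} [Fintype V] (w : V → V → ℝ≥0∞) (s : V)
    (dhat : V → ℝ≥0∞) (hest : ∀ v, dist w s v ≤ dhat v)
    (b B : ℝ≥0∞) (hb : 0 < b) (hbB : b ≤ B)
    (hcomplete : ∀ u, dist w s u < b → dhat u = dist w s u)
    (hrelaxed : ∀ u v, dist w s u < b → dhat v ≤ dist w s u + w u v) :
    ∀ v, dhat v ≠ dist w s v → dist w s v < B →
      ∃ u, dhat u = dist w s u ∧ b ≤ dhat u ∧ dhat u < B ∧ Visits w s u v :=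
  frontier_property_general w s dhat hest b B hb hcomplete hrelaxed

end SSSP
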